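/- arXiv:1204.1956 — 4 statements merged into one kernel-verified Lean document; each statement's English description precedes it below -/
import Mathlib

section
/- Let A be an r×n matrix whose rows each have unit ℓ1 norm and nonnegative entries. If Γ(A) ≥ 2β, where Γ(A) = min_{‖x‖₁=1} ‖xᵀA‖₁, then A is β-robustly simplicial: for every row i and every convex combination y of the other rows of A, ‖Aⁱ − y‖₁ ≥ β. -/
open Matrix BigOperators

/-- entrywise ℓ1 norm of a vector -/
noncomputable def l1 {k : ℕ} (v : Fin k → ℝ) : ℝ := ∑ i, |v i|

theorem stmt3 (r n : ℕ) (A : Matrix (Fin r) (Fin n) ℝ) (β : ℝ)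
    (hpos : ∀ i j, 0 ≤ A i j) (hrow : ∀ i, ∑ j, A i j = 1)
    (hΓ : ∀ x : Fin r → ℝ, l1 x = 1 → 2 * β ≤ l1 (x ᵥ* A)) :
    ∀ i : Fin r, ∀ c : Fin r → ℝ, (∀ j, 0 ≤ c j) → c i = 0 → ∑ j, c j = 1 →
      β ≤ l1 (fun w => A i w - ∑ j, c j * A j w) := by
  intro i c hc hci hsum
  rcases le_or_gt β 0 with hβ | hβ
  · exact hβ.trans (Finset.sum_nonneg fun w _ => abs_nonneg _)
  · set x : Fin r → ℝ := fun j => ((if j = i then (1:ℝ) else 0) - c j) / 2 with hx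
    have hl1 : l1 x = 1 := by
      unfold l1
      have habs : ∀ j, |x j| = ((if j = i then (1:ℝ) else 0) + c j) / 2 := by
        intro j
        by_cases h : j = i
        · subst h; simp [hx, hci]
        · simp only [hx, h, if_neg h, zero_sub, if_false]
          rw [abs_div, abs_neg, abs_of_nonneg (hc j), abs_two]
          ring
      simp_rw [habs]
      rw [← Finset.sum_div, Finset.sum_add_distrib, hsum,
        Finset.sum_ite_eq' Finset.univ i (fun _ => (1:ℝ)), if_pos (Finset.mem_univ i)]
      norm_num
    have hkey := hΓ x hl1
    have hvm : ∀ w, (x ᵥ* A) w = (A i w - ∑ j, c j * A j w) / 2 := by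
      intro w
      simp only [Matrix.vecMul, dotProduct, hx]
      rw [Finset.sum_congr rfl (fun j _ => show ((if j = i then (1:ℝ) else 0) - c j) / 2 * A j w
          = (if j = i then (1:ℝ) else 0) * A j w / 2 - c j * A j w / 2 from by ring),
        Finset.sum_sub_distrib, ← Finset.sum_div, ← Finset.sum_div]
      simp only [ite_mul, one_mul, zero_mul,
        Finset.sum_ite_eq' Finset.univ i (fun j => A j w), if_pos (Finset.mem_univ i)]
      ring
    have hl1A : l1 (x ᵥ* A) = l1 (fun w => A i w - ∑ j, c j * A j w) / 2 := by
      unfold l1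
      simp_rw [hvm, abs_div, abs_two, Finset.sum_div]
    rw [hl1A] at hkey
    linarith
end

section
/- Let R be an invertible r×r matrix, D an invertible diagonal r×r matrix, and A an n×r matrix with Aᵀ𝟙 = 𝟙 (each column of A sums to 1). If z ∈ ℝʳ solves (DRD)z = DRAᵀ𝟙, then z = D⁻¹𝟙, and consequently (DRD·Diag(z))⁻¹(DRAᵀ) = Aᵀ and Diag(z)·(DRD)·Diag(z) = R. -/
open Matrix BigOperators

theorem stmt10 (n r : ℕ) (R : Matrix (Fin r) (Fin r) ℝ) (hR : IsUnit R.det)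
    (d : Fin r → ℝ) (hd : ∀ i, d i ≠ 0)
    (A : Matrix (Fin n) (Fin r) ℝ) (hcol : ∀ j : Fin r, ∑ i, A i j = 1)
    (z : Fin r → ℝ)
    (hz : (diagonal d * R * diagonal d) *ᵥ z =
      (diagonal d * R * A.transpose) *ᵥ (fun _ => (1 : ℝ))) :
    z = (fun i => (d i)⁻¹) ∧
      (diagonal d * R * diagonal d * diagonal z)⁻¹ * (diagonal d * R * A.transpose)
        = A.transpose ∧
      diagonal z * (diagonal d * R * diagonal d) * diagonal z = R := by
  have hD : IsUnit (diagonal d).det := by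
    rw [det_diagonal]
    exact isUnit_iff_ne_zero.mpr (Finset.prod_ne_zero_iff.mpr fun i _ => hd i)
  have hDRD : IsUnit (diagonal d * R * diagonal d).det := by
    simp only [det_mul]
    exact (hD.mul hR).mul hD
  have hAT : A.transpose *ᵥ (fun _ => (1 : ℝ)) = fun _ => (1 : ℝ) := by
    funext j
    simp [mulVec, dotProduct, transpose_apply, hcol j]
  have hDinv : diagonal d *ᵥ (fun i => (d i)⁻¹) = fun _ => (1 : ℝ) := by
    funext i
    simp [mulVec_diagonal, mul_inv_cancel₀ (hd i)]
  have hzval : z = fun i => (d i)⁻¹ := by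
    have h2 : (diagonal d * R * diagonal d) *ᵥ (fun i => (d i)⁻¹) =
        (diagonal d * R * A.transpose) *ᵥ (fun _ => (1 : ℝ)) := by
      simp only [← Matrix.mulVec_mulVec, hAT, hDinv]
    have h3 := hz.trans h2.symm
    have h4 := congrArg (fun v => (diagonal d * R * diagonal d)⁻¹ *ᵥ v) h3
    simpa [Matrix.mulVec_mulVec, Matrix.nonsing_inv_mul _ hDRD] using h4
  have hdiagz : diagonal z = (diagonal d)⁻¹ := by
    refine (Matrix.inv_eq_right_inv ?_).symm
    rw [hzval, diagonal_mul_diagonal]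
    convert diagonal_one with i
    exact mul_inv_cancel₀ (hd i)
  have hcancel : diagonal d * R * diagonal d * diagonal z = diagonal d * R := by
    rw [hdiagz, mul_assoc, Matrix.mul_nonsing_inv _ hD, mul_one]
  refine ⟨hzval, ?_, ?_⟩
  · rw [hcancel, Matrix.mul_inv_rev, Matrix.mul_assoc (diagonal d) R A.transpose,
      Matrix.mul_assoc R⁻¹ _ _, ← Matrix.mul_assoc (diagonal d)⁻¹ _ _, Matrix.nonsing_inv_mul _ hD, Matrix.one_mul,
      ← Matrix.mul_assoc R⁻¹ _ _, Matrix.nonsing_inv_mul _ hR, Matrix.one_mul]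
  · rw [hdiagz, ← mul_assoc, ← mul_assoc, Matrix.nonsing_inv_mul _ hD, one_mul,
      mul_assoc, Matrix.mul_nonsing_inv _ hD, mul_one]
end

section
/- Let E = I + Z be r×r with ε := Σ_{i,j}|Z_{i,j}| < 1/10, let D be an invertible diagonal matrix and R an invertible r×r matrix. Let z solve (DERE ᵀD)z = DER𝟙. Then each diagonal entry of D·Diag(z) lies in [1 − 2ε, 1 + 2ε]. -/
open Matrix BigOperators

lemma aux_bound {r : ℕ} (hne : (Finset.univ : Finset (Fin r)).Nonempty)
    (A : Matrix (Fin r) (Fin r) ℝ) (ε : ℝ)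
    (hA : ∀ i, ∑ j, |A i j| ≤ ε) (v : Fin r → ℝ) (i : Fin r) :
    |(A *ᵥ v) i| ≤ ε * Finset.univ.sup' hne (fun j => |v j|) := by
  set M := Finset.univ.sup' hne (fun j => |v j|) with hM
  have hM0 : 0 ≤ M := le_trans (abs_nonneg (v i)) (Finset.le_sup' (fun j => |v j|) (Finset.mem_univ i))
  calc |(A *ᵥ v) i| = |∑ j, A i j * v j| := rfl
    _ ≤ ∑ j, |A i j * v j| := Finset.abs_sum_le_sum_abs _ _
    _ ≤ ∑ j, |A i j| * M := by
        apply Finset.sum_le_sum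
        intro j _
        rw [abs_mul]
        exact mul_le_mul_of_nonneg_left (Finset.le_sup' (fun j => |v j|) (Finset.mem_univ j)) (abs_nonneg _)
    _ = (∑ j, |A i j|) * M := (Finset.sum_mul _ _ _).symm
    _ ≤ ε * M := mul_le_mul_of_nonneg_right (hA i) hM0

-- injectivity of 1 + A when row sums of |A| are < 1
lemma aux_inj {r : ℕ} (A : Matrix (Fin r) (Fin r) ℝ) (ε : ℝ) (hε1 : ε < 1)
    (hA : ∀ i, ∑ j, |A i j| ≤ ε) (v : Fin r → ℝ)
    (hv : (1 + A) *ᵥ v = 0) : v = 0 := by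
  rcases Nat.eq_zero_or_pos r with hr | hr
  · subst hr; ext i; exact absurd i.2 (by omega)
  have hne : (Finset.univ : Finset (Fin r)).Nonempty := ⟨⟨0, hr⟩, Finset.mem_univ _⟩
  have hv' : ∀ i, v i = -((A *ᵥ v) i) := by
    intro i
    have := congrFun hv i
    rw [add_mulVec, one_mulVec] at this
    have : v i + (A *ᵥ v) i = 0 := this
    linarith
  set M := Finset.univ.sup' hne (fun j => |v j|) with hM
  have hM0 : 0 ≤ M := le_trans (abs_nonneg (v ⟨0, hr⟩))
    (Finset.le_sup' (fun j => |v j|) (Finset.mem_univ _))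
  obtain ⟨i0, _, hi0⟩ := Finset.exists_mem_eq_sup' hne (fun j => |v j|)
  have hle : M ≤ ε * M := by
    calc M = |v i0| := hi0
      _ = |(A *ᵥ v) i0| := by rw [hv' i0, abs_neg]
      _ ≤ ε * M := aux_bound hne A ε hA v i0
  have hMz : M ≤ 0 := by nlinarith
  ext i
  have : |v i| ≤ M := Finset.le_sup' (fun j => |v j|) (Finset.mem_univ i)
  have : |v i| = 0 := le_antisymm (le_trans this hMz) (abs_nonneg _)
  simpa using abs_eq_zero.mp this

theorem stmt11 (r : ℕ) (Z : Matrix (Fin r) (Fin r) ℝ) (ε : ℝ)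
    (hε : ε = ∑ i, ∑ j, |Z i j|) (hsmall : ε < 1 / 10)
    (d : Fin r → ℝ) (hd : ∀ i, d i ≠ 0)
    (R : Matrix (Fin r) (Fin r) ℝ) (hR : IsUnit R.det)
    (E : Matrix (Fin r) (Fin r) ℝ) (hE : E = 1 + Z)
    (z : Fin r → ℝ)
    (hz : (diagonal d * E * R * E.transpose * diagonal d) *ᵥ z =
      (diagonal d * E * R) *ᵥ (fun _ => (1 : ℝ))) :
    ∀ i, d i * z i ∈ Set.Icc (1 - 2 * ε) (1 + 2 * ε) := by
  have hε0 : 0 ≤ ε := by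
    rw [hε]
    positivity
  have hrow : ∀ i, ∑ j, |Z i j| ≤ ε := by
    intro i
    rw [hε]
    exact Finset.single_le_sum (f := fun i => ∑ j, |Z i j|)
      (fun i _ => Finset.sum_nonneg fun j _ => abs_nonneg _) (Finset.mem_univ i)
  have hcol : ∀ i, ∑ j, |Z j i| ≤ ε := by
    intro i
    rw [hε]
    apply Finset.sum_le_sum
    intro j _
    exact Finset.single_le_sum (f := fun k => |Z j k|) (fun k _ => abs_nonneg _)
      (Finset.mem_univ i)
  -- set w = D z
  set w : Fin r → ℝ := fun i => d i * z i with hw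
  -- step 1 : Eᵀ *ᵥ w = 1
  have key : E.transpose *ᵥ w = fun _ => (1 : ℝ) := by
    set u : Fin r → ℝ := E.transpose *ᵥ w - fun _ => (1 : ℝ) with hu
    have hzero : (diagonal d * E * R) *ᵥ u = 0 := by
      have h1 : (diagonal d * E * R * E.transpose * diagonal d) *ᵥ z
          = (diagonal d * E * R) *ᵥ (E.transpose *ᵥ w) := by
        have hdz : diagonal d *ᵥ z = w := by
          ext i; exact mulVec_diagonal d z i
        rw [← hdz, mulVec_mulVec, mulVec_mulVec]
      rw [hu, mulVec_sub, h1.symm, hz, sub_self]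
    -- peel off diagonal d
    have h2 : (E * R) *ᵥ u = 0 := by
      have h3 : diagonal d *ᵥ ((E * R) *ᵥ u) = 0 := by
        rw [mulVec_mulVec, ← Matrix.mul_assoc]
        exact hzero
      ext i
      have := congrFun h3 i
      rw [mulVec_diagonal] at this
      have := mul_eq_zero.mp this
      rcases this with h | h
      · exact absurd h (hd i)
      · exact h
    have h4 : E *ᵥ (R *ᵥ u) = 0 := by rw [mulVec_mulVec]; exact h2
    have h5 : R *ᵥ u = 0 := by
      rw [hE] at h4
      exact aux_inj Z ε (by linarith) hrow _ h4
    have h6 : u = 0 := by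
      have hRinj : Function.Injective R.mulVec :=
        mulVec_injective_iff_isUnit.mpr ((isUnit_iff_isUnit_det R).mpr hR)
      have := hRinj (a₁ := u) (a₂ := 0) (by rw [h5, mulVec_zero])
      exact this
    have := congrArg (· + (fun _ => (1 : ℝ))) h6
    simpa [hu, sub_add_cancel] using this
  -- step 2 : entrywise bound
  intro i
  have hr : 0 < r := i.pos
  have hne : (Finset.univ : Finset (Fin r)).Nonempty := ⟨i, Finset.mem_univ _⟩
  have hZT : ∀ k, ∑ j, |Z.transpose k j| ≤ ε := by
    intro k; simpa [Matrix.transpose_apply] using hcol k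
  have keyi : ∀ k, w k + (Z.transpose *ᵥ w) k = 1 := by
    intro k
    have := congrFun key k
    rw [hE, Matrix.transpose_add, Matrix.transpose_one, add_mulVec, one_mulVec] at this
    exact this
  set M := Finset.univ.sup' hne (fun j => |w j|) with hM
  have hM0 : 0 ≤ M := le_trans (abs_nonneg (w i)) (Finset.le_sup' (fun j => |w j|) (Finset.mem_univ i))
  have hbound : ∀ k, |w k - 1| ≤ ε * M := by
    intro k
    have : w k - 1 = -((Z.transpose *ᵥ w) k) := by have := keyi k; linarith
    rw [this, abs_neg]
    exact aux_bound hne _ ε hZT w k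
  -- M ≤ 1 + ε M
  have hMle : M ≤ 1 + ε * M := by
    obtain ⟨i0, _, hi0⟩ := Finset.exists_mem_eq_sup' hne (fun j => |w j|)
    have h1 : |w i0| ≤ 1 + |w i0 - 1| := by
      have := abs_sub_abs_le_abs_sub (w i0) 1
      simp only [abs_one] at this
      linarith
    calc M = |w i0| := hi0
      _ ≤ 1 + |w i0 - 1| := h1
      _ ≤ 1 + ε * M := by linarith [hbound i0]
  have hfinal : ε * M ≤ 2 * ε := by nlinarith
  have := hbound i
  have h7 : |w i - 1| ≤ 2 * ε := le_trans this hfinal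
  rw [abs_le] at h7
  constructor <;> [skip; skip] <;> simp only [hw] at * <;> linarith [h7.1, h7.2]
end

section
/- Let R be an r×r matrix whose entries differ from those of a matrix R(T) by at most ε₀ in absolute value, where every row of R(T) has ℓ1 norm at least 1/(ar) and the row-normalized version of R(T) has ℓ1 condition number at least γ. If ε₀ < γ/(4ar²), then the row-normalized version of R has ℓ1 condition number at least γ/2. -/
open Matrix BigOperators

/-- row-normalized version of a matrix: each row is rescaled to sum to 1 -/
noncomputable def normRows {r : ℕ} (B : Matrix (Fin r) (Fin r) ℝ) :
    Matrix (Fin r) (Fin r) ℝ :=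
  fun i j => B i j / ∑ k, B i k

/-!
Write `s i` for the row sums of `R(T)`. Rows of a matrix close to `R(T)` normalize to rows close
to those of `normRows R(T)`: the ℓ1 distance of the normalized `i`-th rows is at most
`2 ‖R i - R(T) i‖₁ / s i ≤ 2 r ε₀ · a r`. A unit vector `x` then moves `xᵀ normRows` by at most
`2 a r² ε₀ < γ / 2` in ℓ1, which costs at most half of the condition number `γ`.
-/

-- When `∑ i, v i = 0` this is `0`, by division by zero.
noncomputable def normalizeSum {k : ℕ} (v : Fin k → ℝ) : Fin k → ℝ :=
  fun j => v j / ∑ i, v i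

namespace l1

variable {k : ℕ}

lemma le_add_sub (v w : Fin k → ℝ) : l1 v ≤ l1 w + l1 (v - w) := by
  rw [l1, l1, l1, ← Finset.sum_add_distrib]
  refine Finset.sum_le_sum fun j _ => ?_
  rw [Pi.sub_apply]
  linarith [abs_sub_abs_le_abs_sub (v j) (w j)]

lemma le_card_mul_of_abs_le {v : Fin k → ℝ} {ε : ℝ} (h : ∀ j, |v j| ≤ ε) : l1 v ≤ k * ε := by
  unfold l1
  simpa using Finset.sum_le_sum fun j (_ : j ∈ Finset.univ) => h j

lemma abs_sum_sub_sum_le (v w : Fin k → ℝ) : |∑ j, v j - ∑ j, w j| ≤ l1 (v - w) := by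
  rw [← Finset.sum_sub_distrib]
  exact Finset.abs_sum_le_sum_abs _ _

lemma vecMul_sub_le {m : ℕ} (x : Fin m → ℝ) (A B : Matrix (Fin m) (Fin k) ℝ) {δ : ℝ}
    (hrow : ∀ i, l1 (A i - B i) ≤ δ) : l1 (x ᵥ* A - x ᵥ* B) ≤ l1 x * δ := by
  calc l1 (x ᵥ* A - x ᵥ* B) = ∑ j, |∑ i, x i * (A i j - B i j)| := by
        simp only [l1, Pi.sub_apply, vecMul, dotProduct, mul_sub, Finset.sum_sub_distrib]
    _ ≤ ∑ j, ∑ i, |x i| * |A i j - B i j| := by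
        gcongr with j
        exact (Finset.abs_sum_le_sum_abs _ _).trans_eq (by simp only [abs_mul])
    _ = ∑ i, |x i| * l1 (A i - B i) := by
        rw [Finset.sum_comm]
        simp only [l1, Pi.sub_apply, Finset.mul_sum]
    _ ≤ ∑ i, |x i| * δ := by gcongr with i; exact hrow i
    _ = l1 x * δ := by rw [l1, Finset.sum_mul]

/-- The normalization error of a nonnegative `u` is absorbed by the `1 / ∑ v` factor:
`∑ u · |1/∑ v - 1/∑ u| ≤ |∑ u - ∑ v| / ∑ v ≤ l1 (v - u) / ∑ v`. -/
lemma normalizeSum_sub_le {u v : Fin k → ℝ} (hu : 0 ≤ u) (hv : 0 < ∑ j, v j) :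
    l1 (normalizeSum v - normalizeSum u) ≤ 2 * l1 (v - u) / ∑ j, v j := by
  set S := ∑ j, v j
  set S' := ∑ j, u j
  have hS' : 0 ≤ S' := Finset.sum_nonneg fun j _ => hu j
  have hscale : S' * |1 / S - 1 / S'| ≤ |S - S'| / S := by
    rcases hS'.eq_or_lt with h0 | hpos
    · rw [← h0, zero_mul]; positivity
    · calc S' * |1 / S - 1 / S'| = |S' * (1 / S - 1 / S')| := by rw [abs_mul, abs_of_pos hpos]
        _ = |(S - S') / S| := by rw [← abs_neg]; congr 1; field_simp; ring
        _ ≤ |S - S'| / S := by rw [abs_div, abs_of_pos hv]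
  calc l1 (normalizeSum v - normalizeSum u)
      = ∑ j, |(v j - u j) / S + u j * (1 / S - 1 / S')| := by
        refine Finset.sum_congr rfl fun j _ => ?_
        change |v j / S - u j / S'| = _
        ring_nf
    _ ≤ ∑ j, (|v j - u j| / S + u j * |1 / S - 1 / S'|) := by
        gcongr with j
        refine (abs_add_le _ _).trans_eq ?_
        rw [abs_div, abs_of_pos hv, abs_mul, abs_of_nonneg (hu j)]
    _ = l1 (v - u) / S + S' * |1 / S - 1 / S'| := by
        rw [Finset.sum_add_distrib, ← Finset.sum_div, ← Finset.sum_mul]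
        rfl
    _ ≤ l1 (v - u) / S + l1 (v - u) / S := by
        gcongr
        exact hscale.trans (by gcongr; exact abs_sum_sub_sum_le v u)
    _ = 2 * l1 (v - u) / S := by ring

end l1

theorem stmt19_general (r : ℕ) (hr : 0 < r) (RT R : Matrix (Fin r) (Fin r) ℝ)
    (a γ ε₀ : ℝ) (ha : 1 ≤ a) (hε₀ : 0 ≤ ε₀)
    (hRpos : ∀ i j, 0 ≤ R i j)
    (hclose : ∀ i j, |R i j - RT i j| ≤ ε₀)
    (hrowsum : ∀ i, 1 / (a * r) ≤ ∑ k, RT i k)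
    (hcond : ∀ x : Fin r → ℝ, l1 x = 1 → γ ≤ l1 (x ᵥ* normRows RT))
    (hεsmall : ε₀ < γ / (4 * a * r ^ 2)) :
    ∀ x : Fin r → ℝ, l1 x = 1 → γ / 2 ≤ l1 (x ᵥ* normRows R) := by
  intro x hx
  have har : 0 < a * r := by positivity
  have hrow : ∀ i, l1 (normRows RT i - normRows R i) ≤ 2 * (r * ε₀) * (a * r) := by
    intro i
    have hspos : 0 < ∑ k, RT i k := lt_of_lt_of_le (by positivity) (hrowsum i)
    calc l1 (normRows RT i - normRows R i) ≤ 2 * l1 (RT i - R i) / ∑ k, RT i k :=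
          l1.normalizeSum_sub_le (hRpos i) hspos
      _ ≤ 2 * (r * ε₀) * (1 / ∑ k, RT i k) := by
          rw [mul_one_div]
          gcongr
          refine l1.le_card_mul_of_abs_le fun j => ?_
          rw [Pi.sub_apply, abs_sub_comm]
          exact hclose i j
      _ ≤ 2 * (r * ε₀) * (a * r) := by
          gcongr
          exact (one_div_le har hspos).mp (hrowsum i)
  have hsmall : 2 * (r * ε₀) * (a * r) < γ / 2 := by
    rw [lt_div_iff₀ (by positivity)] at hεsmall
    linarith
  calc γ / 2 ≤ γ - 2 * (r * ε₀) * (a * r) := by linarith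
    _ ≤ l1 (x ᵥ* normRows RT) - l1 (x ᵥ* normRows RT - x ᵥ* normRows R) := by
        gcongr
        · exact hcond x hx
        · simpa [hx] using l1.vecMul_sub_le x _ _ hrow
    _ ≤ l1 (x ᵥ* normRows R) := by
        linarith [l1.le_add_sub (x ᵥ* normRows RT) (x ᵥ* normRows R)]

theorem stmt19 (r : ℕ) (hr : 0 < r) (RT R : Matrix (Fin r) (Fin r) ℝ)
    (a γ ε₀ : ℝ) (ha : 1 ≤ a) (hγ : 0 < γ) (hε₀ : 0 ≤ ε₀)
    (hRTpos : ∀ i j, 0 ≤ RT i j) (hRpos : ∀ i j, 0 ≤ R i j)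
    (hclose : ∀ i j, |R i j - RT i j| ≤ ε₀)
    (hrowsum : ∀ i, 1 / (a * r) ≤ ∑ k, RT i k)
    (hcond : ∀ x : Fin r → ℝ, l1 x = 1 → γ ≤ l1 (x ᵥ* normRows RT))
    (hεsmall : ε₀ < γ / (4 * a * r ^ 2)) :
    ∀ x : Fin r → ℝ, l1 x = 1 → γ / 2 ≤ l1 (x ᵥ* normRows R) :=
  stmt19_general r hr RT R a γ ε₀ ha hε₀ hRpos hclose hrowsum hcond hεsmall
end
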